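/- arXiv:0711.2843 — 7 statements merged into one kernel-verified Lean document; each statement's English description precedes it below -/
import Mathlib

section
/- Let r ≥ 1 and let G be a simple graph in which every vertex is contained in a clique of size r+1. Then for every k, G has a proper k-coloring if and only if G is (k,r)-colorable; hence χ_r(G) = χ(G). -/
/-- A conditional `(k,r)`-coloring (with color type `α` of size `k`):
(C1) adjacent vertices get different colors, and
(C2) every vertex `v` sees at least `min (d v) r` distinct colors on its neighborhood. -/
def IsCondColoring {V α : Type*} (G : SimpleGraph V) (r : ℕ) (c : V → α) : Prop :=
  (∀ ⦃u v : V⦄, G.Adj u v → c u ≠ c v) ∧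
  ∀ v : V, min (G.neighborSet v).ncard r ≤ (c '' G.neighborSet v).ncard

/-- The `r`-th order conditional chromatic number `χ_r(G)`. -/
noncomputable def condChromaticNumber {V : Type*} (G : SimpleGraph V) (r : ℕ) : ℕ∞ :=
  ⨅ k ∈ {k : ℕ | ∃ c : V → Fin k, IsCondColoring G r c}, (k : ℕ∞)

/-!
The other `r` members of an `(r+1)`-clique through `v` are neighbors of `v` and pairwise
adjacent, so any proper coloring already shows `r` distinct colors on `N(v)`: condition (C2)
is automatic, and conditional colorings are exactly proper colorings.
-/

namespace SimpleGraph

variable {V α : Type*} {G : SimpleGraph V}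

theorem Coloring.injOn_of_isClique (C : G.Coloring α) {s : Set V} (hs : G.IsClique s) :
    Set.InjOn C s :=
  fun _ hu _ hv huv => by_contra fun hne => C.valid (hs hu hv hne) huv

theorem IsClique.diff_singleton_subset_neighborSet {s : Set V} (hs : G.IsClique s) {v : V}
    (hv : v ∈ s) : s \ {v} ⊆ G.neighborSet v :=
  fun _ hu => hs hv hu.1 (Ne.symm hu.2)

theorem Coloring.le_ncard_image_neighborSet [Finite α] (C : G.Coloring α) {r : ℕ} {v : V}
    {s : Finset V} (hs : G.IsNClique (r + 1) s) (hv : v ∈ s) :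
    r ≤ (C '' G.neighborSet v).ncard := by
  classical
  have hrest : G.IsNClique r (s.erase v) := hs.erase_of_mem hv
  calc r = (C '' ↑(s.erase v)).ncard := by
        rw [(C.injOn_of_isClique hrest.isClique).ncard_image, Set.ncard_coe_finset,
          hrest.card_eq]
    _ ≤ (C '' G.neighborSet v).ncard := by
        refine Set.ncard_le_ncard (Set.image_mono ?_) (Set.toFinite _)
        rw [Finset.coe_erase]
        exact hs.isClique.diff_singleton_subset_neighborSet hv

theorem Coloring.isCondColoring [Finite α] (C : G.Coloring α) {r : ℕ}
    (hcl : ∀ v, ∃ s : Finset V, v ∈ s ∧ G.IsNClique (r + 1) s) : IsCondColoring G r C := by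
  refine ⟨fun _ _ h => C.valid h, fun v => ?_⟩
  obtain ⟨s, hv, hs⟩ := hcl v
  exact (min_le_right _ _).trans (C.le_ncard_image_neighborSet hs hv)

theorem colorable_iff_exists_isCondColoring {r : ℕ}
    (hcl : ∀ v, ∃ s : Finset V, v ∈ s ∧ G.IsNClique (r + 1) s) (k : ℕ) :
    G.Colorable k ↔ ∃ c : V → Fin k, IsCondColoring G r c :=
  ⟨fun ⟨C⟩ => ⟨C, C.isCondColoring hcl⟩, fun ⟨c, hc, _⟩ => ⟨Coloring.mk c fun h => hc h⟩⟩

theorem condChromaticNumber_eq_chromaticNumber {r : ℕ}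
    (h : ∀ k : ℕ, G.Colorable k ↔ ∃ c : V → Fin k, IsCondColoring G r c) :
    condChromaticNumber G r = G.chromaticNumber := by
  have hset : {k : ℕ | ∃ c : V → Fin k, IsCondColoring G r c} = Set.ofPred G.Colorable :=
    Set.ext fun k => (h k).symm
  rw [condChromaticNumber, hset, chromaticNumber]

end SimpleGraph

theorem stmt_4_general {V : Type*} (G : SimpleGraph V) (r : ℕ)
    (hcl : ∀ v : V, ∃ s : Finset V, v ∈ s ∧ G.IsClique ↑s ∧ s.card = r + 1) :
    (∀ k : ℕ, G.Colorable k ↔ ∃ c : V → Fin k, IsCondColoring G r c) ∧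
    condChromaticNumber G r = G.chromaticNumber := by
  have hcl' : ∀ v, ∃ s : Finset V, v ∈ s ∧ G.IsNClique (r + 1) s := fun v =>
    let ⟨s, hv, hs, hcard⟩ := hcl v
    ⟨s, hv, ⟨hs, hcard⟩⟩
  have hcol := G.colorable_iff_exists_isCondColoring hcl'
  exact ⟨hcol, SimpleGraph.condChromaticNumber_eq_chromaticNumber hcol⟩

/-- If every vertex of `G` lies in a clique of size `r+1`, then `G` is properly
`k`-colorable iff it is `(k,r)`-colorable; hence `χ_r(G) = χ(G)`. -/
theorem stmt_4 {V : Type*} [Fintype V] (G : SimpleGraph V) (r : ℕ) (hr : 1 ≤ r)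
    (hcl : ∀ v : V, ∃ s : Finset V, v ∈ s ∧ G.IsClique ↑s ∧ s.card = r + 1) :
    (∀ k : ℕ, G.Colorable k ↔ ∃ c : V → Fin k, IsCondColoring G r c) ∧
    condChromaticNumber G r = G.chromaticNumber :=
  stmt_4_general G r hcl
end

section
/- Let k > r ≥ 2 be integers, let G be a simple graph on vertex set V, and let G' be the graph on vertex set V ⊕ (V × {1,…,r}) obtained from G by attaching to each vertex v of G the r new vertices (v,1),…,(v,r) forming with v a complete graph K_{r+1} (with no other new edges). Then G has a proper k-coloring if and only if G' has a conditional (k,r)-coloring. -/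
/-- The graph `G'` obtained from `G` by attaching to each vertex `v` the `r` new
vertices `(v,1),…,(v,r)`, which together with `v` induce a complete graph `K_{r+1}`;
there are no other new edges. -/
def attachCliques {V : Type*} (G : SimpleGraph V) (r : ℕ) :
    SimpleGraph (V ⊕ V × Fin r) :=
  SimpleGraph.fromRel (fun a b =>
    match a, b with
    | Sum.inl u, Sum.inl v => G.Adj u v
    | Sum.inl u, Sum.inr (v, _) => u = v
    | Sum.inr (u, _), Sum.inl v => u = v
    | Sum.inr (u, _), Sum.inr (v, _) => u = v)

/-- For `k > r ≥ 2`, `G` has a proper `k`-coloring iff `G'` has a conditional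
`(k,r)`-coloring. -/
theorem stmt_6 {V : Type*} [Fintype V] (G : SimpleGraph V) (k r : ℕ)
    (hr : 2 ≤ r) (hk : r < k) :
    G.Colorable k ↔
      ∃ c : V ⊕ V × Fin r → Fin k, IsCondColoring (attachCliques G r) r c := by
  constructor
  · rintro ⟨col⟩
    have hcol : ∀ {u v}, G.Adj u v → col u ≠ col v := fun h => col.valid h
    set f : V → Fin r → Fin k := fun v i =>
      if (i : ℕ) < (col v : ℕ) then ⟨i, i.2.trans hk⟩ else ⟨i + 1, by omega⟩ with hf
    have hfne : ∀ v i, f v i ≠ col v := by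
      intro v i
      simp only [hf]
      split <;> (intro h; apply_fun Fin.val at h; simp at h; omega)
    have hfinj : ∀ v, Function.Injective (f v) := by
      intro v i j h
      simp only [hf] at h
      apply Fin.ext
      split at h <;> split at h <;> (apply_fun Fin.val at h; simp at h; omega)
    set c : V ⊕ V × Fin r → Fin k := Sum.elim col (fun p => f p.1 p.2) with hc
    refine ⟨c, ?_, ?_⟩
    · rintro a b hab
      rw [attachCliques, SimpleGraph.fromRel_adj] at hab
      obtain ⟨hne, h⟩ := hab
      match a, b with
      | Sum.inl u, Sum.inl v =>
        simp only at h
        rcases h with h | h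
        · exact hcol h
        · exact (hcol h).symm
      | Sum.inl u, Sum.inr (v, i) =>
        simp only at h
        have huv : u = v := by tauto
        subst huv
        exact (hfne u i).symm
      | Sum.inr (u, i), Sum.inl v =>
        simp only at h
        have huv : u = v := by tauto
        subst huv
        exact hfne u i
      | Sum.inr (u, i), Sum.inr (v, j) =>
        simp only at h
        have huv : u = v := by tauto
        subst huv
        intro hcc
        exact hne (by have hij : i = j := hfinj u hcc; rw [hij])
    · rintro (v | ⟨v, i⟩)
      · -- original vertex: image contains range (f v), of size r
        have hsub : Set.range (f v) ⊆ c '' ((attachCliques G r).neighborSet (Sum.inl v)) := by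
          rintro _ ⟨i, rfl⟩
          refine ⟨Sum.inr (v, i), ?_, rfl⟩
          simp [attachCliques, SimpleGraph.neighborSet, SimpleGraph.fromRel_adj]
        have hr1 : (Set.range (f v)).ncard = r := by
          rw [← Set.image_univ, Set.ncard_image_of_injective _ (hfinj v), Set.ncard_univ]
          simp
        calc min ((attachCliques G r).neighborSet (Sum.inl v)).ncard r ≤ r := min_le_right _ _
          _ = (Set.range (f v)).ncard := hr1.symm
          _ ≤ _ := Set.ncard_le_ncard hsub (Set.toFinite _)
      · -- attached vertex: c is injective on the neighborhood
        have hmem : ∀ a ∈ (attachCliques G r).neighborSet (Sum.inr (v, i)),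
            a = Sum.inl v ∨ ∃ j, j ≠ i ∧ a = Sum.inr (v, j) := by
          rintro (u | ⟨u, j⟩) ha <;>
            simp only [SimpleGraph.mem_neighborSet, attachCliques,
              SimpleGraph.fromRel_adj] at ha
          · obtain ⟨-, h⟩ := ha
            have : v = u := by tauto
            subst this; exact Or.inl rfl
          · obtain ⟨hne, h⟩ := ha
            have : v = u := by tauto
            subst this
            refine Or.inr ⟨j, ?_, rfl⟩
            intro hj; exact hne (by rw [hj])
        have hinj : Set.InjOn c ((attachCliques G r).neighborSet (Sum.inr (v, i))) := by
          intro a ha b hb hab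
          rcases hmem a ha with rfl | ⟨j, hj, rfl⟩ <;>
            rcases hmem b hb with rfl | ⟨j', hj', rfl⟩
          · rfl
          · exact absurd hab.symm (hfne v j')
          · exact absurd hab (hfne v j)
          · have hij : j = j' := hfinj v hab
            rw [hij]
        rw [Set.ncard_image_of_injOn hinj]
        exact min_le_left _ _
  · rintro ⟨c, hc1, -⟩
    refine ⟨⟨fun v => c (Sum.inl v), ?_⟩⟩
    intro u v huv
    apply hc1
    rw [attachCliques, SimpleGraph.fromRel_adj]
    exact ⟨by simp [huv.ne], Or.inl huv⟩
end

section
/- Let n ≥ 4 and let c be a conditional (3,2)-coloring of the path P_n with vertices v_0, v_1, …, v_{n−1}. Then c(v_{i+3}) = c(v_i) for all 0 ≤ i ≤ n−4. Consequently, any two vertices whose indices are congruent modulo 3 receive the same color. -/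
lemma nbhd (n : ℕ) (i : ℕ) (h1 : i + 2 < n) :
    (SimpleGraph.pathGraph n).neighborSet ⟨i+1, by omega⟩
      = {⟨i, by omega⟩, ⟨i+2, h1⟩} := by
  ext u
  simp only [SimpleGraph.neighborSet, Set.mem_setOf_eq, SimpleGraph.pathGraph_adj,
    Set.mem_insert_iff, Set.mem_singleton_iff, Fin.ext_iff]
  omega

lemma step2 (n : ℕ) (c : Fin n → Fin 3)
    (hc : IsCondColoring (SimpleGraph.pathGraph n) 2 c)
    (i : ℕ) (h : i + 2 < n) : c ⟨i, by omega⟩ ≠ c ⟨i+2, h⟩ := by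
  intro heq
  have h2 := hc.2 ⟨i+1, by omega⟩
  rw [nbhd n i h] at h2
  have hne : (⟨i, by omega⟩ : Fin n) ≠ ⟨i+2, h⟩ := by simp [Fin.ext_iff]
  rw [Set.ncard_pair hne, Set.image_pair, ← heq, Set.pair_eq_singleton,
    Set.ncard_singleton] at h2
  omega

lemma fin3 : ∀ a b c d : Fin 3, a ≠ b → a ≠ c → b ≠ c → d ≠ b → d ≠ c → d = a := by
  intro a b c d h1 h2 h3 h4 h5
  have ha := a.isLt; have hb := b.isLt; have hc := c.isLt; have hd := d.isLt
  simp only [ne_eq, Fin.ext_iff] at *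
  omega

/-- In any conditional `(3,2)`-coloring of the path `P_n` (`n ≥ 4`) we have
`c (v_{i+3}) = c (v_i)`; consequently vertices with indices congruent mod `3`
get the same color. -/
theorem stmt_8 (n : ℕ) (hn : 4 ≤ n) (c : Fin n → Fin 3)
    (hc : IsCondColoring (SimpleGraph.pathGraph n) 2 c) :
    (∀ i : ℕ, ∀ h : i + 3 < n, c ⟨i + 3, h⟩ = c ⟨i, by omega⟩) ∧
    (∀ i j : ℕ, ∀ (hi : i < n) (hj : j < n),
      i % 3 = j % 3 → c ⟨i, hi⟩ = c ⟨j, hj⟩) := by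
  have adjne : ∀ i : ℕ, ∀ h : i + 1 < n, c ⟨i, by omega⟩ ≠ c ⟨i+1, h⟩ := by
    intro i h
    exact hc.1 (SimpleGraph.pathGraph_adj.mpr (Or.inl rfl))
  have key : ∀ i : ℕ, ∀ h : i + 3 < n, c ⟨i + 3, h⟩ = c ⟨i, by omega⟩ := by
    intro i h
    exact fin3 _ _ _ _ (adjne i (by omega)) (step2 n c hc i (by omega))
      (adjne (i+1) (by omega))
      (fun he => step2 n c hc (i+1) (by omega) he.symm)
      (fun he => adjne (i+2) (by omega) he.symm)
  refine ⟨key, ?_⟩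
  have mul3 : ∀ k i : ℕ, ∀ hi : i + 3 * k < n, c ⟨i + 3 * k, hi⟩ = c ⟨i, by omega⟩ := by
    intro k
    induction k with
    | zero => intro i hi; rfl
    | succ m ih =>
      intro i hi
      have h1 : i + 3 * (m + 1) = (i + 3 * m) + 3 := by ring
      have h2 : (i + 3 * m) + 3 < n := by omega
      calc c ⟨i + 3 * (m + 1), hi⟩ = c ⟨(i + 3 * m) + 3, h2⟩ := by congr 1
        _ = c ⟨i + 3 * m, by omega⟩ := key _ h2
        _ = c ⟨i, by omega⟩ := ih i (by omega)
  intro i j hi hj hmod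
  rcases le_total i j with hle | hle
  · obtain ⟨k, rfl⟩ : ∃ k, j = i + 3 * k := ⟨(j - i) / 3, by omega⟩
    exact (mul3 k i hj).symm
  · obtain ⟨k, rfl⟩ : ∃ k, i = j + 3 * k := ⟨(i - j) / 3, by omega⟩
    exact mul3 k j hi
end

section
/- Let t ≥ 1 and s ≥ 1, and let B be the simple graph consisting of two vertex-disjoint paths P = p_0 p_1 ⋯ p_{3t−3} (on 3t−2 vertices) and Q = q_0 q_1 ⋯ q_{3s+1} (on 3s+2 vertices), together with the single additional edge p_{3t−3} q_0. Then in every conditional (3,2)-coloring c of B: all vertices p_{3j} for 0 ≤ j ≤ t−1 receive the same color; all vertices q_{3j} for 0 ≤ j ≤ s receive the same color; and these two common colors are distinct. -/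
/-- The building block `B`: the disjoint union of a path `p_0 ⋯ p_{3t-3}` on `3t-2`
vertices and a path `q_0 ⋯ q_{3s+1}` on `3s+2` vertices, plus the edge `p_{3t-3} q_0`. -/
def blockB (t s : ℕ) : SimpleGraph (Fin (3 * t - 2) ⊕ Fin (3 * s + 2)) :=
  SimpleGraph.fromRel (fun a b =>
    match a, b with
    | Sum.inl i, Sum.inl j => (i : ℕ) + 1 = (j : ℕ)
    | Sum.inr i, Sum.inr j => (i : ℕ) + 1 = (j : ℕ)
    | Sum.inl i, Sum.inr j => (i : ℕ) = 3 * t - 3 ∧ (j : ℕ) = 0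
    | Sum.inr _, Sum.inl _ => False)

theorem IsCondColoring.comp_iso {V W α : Type*} {G : SimpleGraph V} {G' : SimpleGraph W} {r : ℕ}
    {c : W → α} (hc : IsCondColoring G' r c) (f : G ≃g G') : IsCondColoring G r (c ∘ f) := by
  refine ⟨fun u v huv => hc.1 (f.map_adj_iff.2 huv), fun v => ?_⟩
  rw [Set.image_comp, f.image_neighborSet, ← Set.ncard_image_of_injective _ f.injective,
    f.image_neighborSet]
  exact hc.2 (f v)

theorem IsCondColoring.apply_ne_of_neighborSet_eq_pair {V α : Type*} {G : SimpleGraph V}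
    {c : V → α} (hc : IsCondColoring G 2 c) {u v w : V} (hv : G.neighborSet v = {u, w})
    (huw : u ≠ w) : c u ≠ c w := by
  intro h
  have := hc.2 v
  rw [hv, Set.ncard_pair huw, Set.image_pair, h, Set.pair_eq_singleton, Set.ncard_singleton] at this
  omega

theorem eq_of_ne_of_card_le_three {α : Type*} [Fintype α] (hα : Fintype.card α ≤ 3)
    {a b d e : α} (hab : a ≠ b) (had : a ≠ d) (hbd : b ≠ d) (heb : e ≠ b) (hed : e ≠ d) :
    e = a := by
  by_contra hea
  have : [a, b, d, e].Nodup := by simp [*, Ne.symm hea, Ne.symm heb, Ne.symm hed]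
  have := this.length_le_card
  simp only [List.length_cons, List.length_nil] at this
  omega

theorem pathGraph_neighborSet_succ {n i : ℕ} (h : i + 2 < n) :
    (SimpleGraph.pathGraph n).neighborSet ⟨i + 1, by omega⟩ = {⟨i, by omega⟩, ⟨i + 2, h⟩} := by
  ext x
  simp only [SimpleGraph.mem_neighborSet, SimpleGraph.pathGraph_adj, Set.mem_insert_iff,
    Set.mem_singleton_iff, Fin.ext_iff]
  omega

namespace IsCondColoring

variable {n : ℕ} {α : Type*} [Fintype α] {c : Fin n → α}
  (hc : IsCondColoring (SimpleGraph.pathGraph n) 2 c) (hα : Fintype.card α ≤ 3)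
include hc hα

theorem pathGraph_apply_add_three {i : ℕ} (h : i + 3 < n) :
    c ⟨i + 3, h⟩ = c ⟨i, by omega⟩ := by
  have adj {j : ℕ} (hj : j + 1 < n) :
      (SimpleGraph.pathGraph n).Adj ⟨j, by omega⟩ ⟨j + 1, hj⟩ := by
    simp [SimpleGraph.pathGraph_adj]
  have h02 := hc.apply_ne_of_neighborSet_eq_pair (pathGraph_neighborSet_succ (i := i) (by omega))
    (by simp [Fin.ext_iff])
  have h13 := hc.apply_ne_of_neighborSet_eq_pair
    (pathGraph_neighborSet_succ (i := i + 1) (by omega)) (by simp [Fin.ext_iff])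
  exact eq_of_ne_of_card_le_three hα (hc.1 (adj (j := i) (by omega)))
    h02 (hc.1 (adj (j := i + 1) (by omega))) h13.symm (hc.1 (adj (j := i + 2) h)).symm

theorem pathGraph_apply_add_mul_three {i : ℕ} (k : ℕ) (h : i + 3 * k < n) :
    c ⟨i + 3 * k, h⟩ = c ⟨i, by omega⟩ := by
  induction k with
  | zero => rfl
  | succ k ih =>
    simp only [Nat.mul_succ, ← Nat.add_assoc] at h ⊢
    rw [hc.pathGraph_apply_add_three hα h, ih]

theorem pathGraph_apply_eq_of_modEq {u v : Fin n} (huv : (u : ℕ) ≡ v [MOD 3]) : c u = c v := by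
  wlog hle : (u : ℕ) ≤ v generalizing u v
  · exact (this huv.symm (by omega)).symm
  obtain ⟨k, hk⟩ := (Nat.modEq_iff_dvd' hle).1 huv
  have hv : v = ⟨u + 3 * k, by omega⟩ := by ext; simp only; omega
  rw [hv, hc.pathGraph_apply_add_mul_three hα k]

end IsCondColoring

def blockBIsoPathGraph (t s : ℕ) (ht : 1 ≤ t) :
    blockB t s ≃g SimpleGraph.pathGraph (3 * t + 3 * s) where
  toEquiv := finSumFinEquiv.trans (finCongr (by omega))
  map_rel_iff' {a b} := by
    rcases a with ⟨a, ha⟩ | ⟨a, ha⟩ <;> rcases b with ⟨b, hb⟩ | ⟨b, hb⟩ <;>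
      simp only [blockB, SimpleGraph.fromRel_adj, SimpleGraph.pathGraph_adj, Equiv.trans_apply,
        finSumFinEquiv_apply_left, finSumFinEquiv_apply_right, finCongr_apply, Fin.val_cast,
        Fin.val_castAdd, Fin.val_natAdd, ne_eq, Sum.inl.injEq, Sum.inr.injEq, reduceCtorEq,
        Fin.ext_iff, not_false_eq_true, true_and, or_false, false_or] <;> omega

@[simp]
theorem blockBIsoPathGraph_inl {t s : ℕ} (ht : 1 ≤ t) (i : Fin (3 * t - 2)) :
    (blockBIsoPathGraph t s ht (Sum.inl i) : ℕ) = i := rfl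

@[simp]
theorem blockBIsoPathGraph_inr {t s : ℕ} (ht : 1 ≤ t) (i : Fin (3 * s + 2)) :
    (blockBIsoPathGraph t s ht (Sum.inr i) : ℕ) = 3 * t - 2 + i := rfl

/-- In every conditional `(3,2)`-coloring of `B`: all `p_{3j}` get one common color,
all `q_{3j}` get one common color, and these two colors are distinct. -/
theorem stmt_10 (t s : ℕ) (ht : 1 ≤ t)
    (c : Fin (3 * t - 2) ⊕ Fin (3 * s + 2) → Fin 3)
    (hc : IsCondColoring (blockB t s) 2 c) :
    (∀ j j' : ℕ, ∀ (hj : j ≤ t - 1) (hj' : j' ≤ t - 1),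
      c (Sum.inl ⟨3 * j, by omega⟩) = c (Sum.inl ⟨3 * j', by omega⟩)) ∧
    (∀ j j' : ℕ, ∀ (hj : j ≤ s) (hj' : j' ≤ s),
      c (Sum.inr ⟨3 * j, by omega⟩) = c (Sum.inr ⟨3 * j', by omega⟩)) ∧
    c (Sum.inl ⟨0, by omega⟩) ≠ c (Sum.inr ⟨0, by omega⟩) := by
  set e := blockBIsoPathGraph t s ht
  have hsame {u v} (huv : (e u : ℕ) ≡ e v [MOD 3]) : c u = c v := by
    simpa using (hc.comp_iso e.symm).pathGraph_apply_eq_of_modEq (by simp) huv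
  refine ⟨fun j j' _ _ => hsame ?_, fun j j' _ _ => hsame ?_, ?_⟩
  · simp [e, Nat.ModEq]
  · exact Nat.ModEq.add_left _ (by simp [Nat.ModEq])
  · rw [hsame (v := Sum.inl ⟨3 * t - 3, by omega⟩) (by simp only [Nat.ModEq, blockBIsoPathGraph_inl, Nat.zero_mod, e]; omega)]
    exact hc.1 (by simp [blockB])
end

section
/- Let m ≥ 1 and n ≥ 1, and let H be the simple graph consisting of two vertex-disjoint paths A = a_0 a_1 ⋯ a_{m−1} and B = b_0 b_1 ⋯ b_{n−1}, together with the single additional edge a_0 b_0. Then in every conditional (3,2)-coloring c of H: all vertices a_{3i} (0 ≤ 3i ≤ m−1) receive the same color; all vertices b_{3j} (0 ≤ 3j ≤ n−1) receive the same color; and these two common colors are distinct. -/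
/-- Two disjoint paths `a_0 ⋯ a_{m-1}` and `b_0 ⋯ b_{n-1}` joined by the single
extra edge `a_0 b_0`. -/
def twoPathsJoined (m n : ℕ) : SimpleGraph (Fin m ⊕ Fin n) :=
  SimpleGraph.fromRel (fun a b =>
    match a, b with
    | Sum.inl i, Sum.inl j => (i : ℕ) + 1 = (j : ℕ)
    | Sum.inr i, Sum.inr j => (i : ℕ) + 1 = (j : ℕ)
    | Sum.inl i, Sum.inr j => (i : ℕ) = 0 ∧ (j : ℕ) = 0
    | Sum.inr _, Sum.inl _ => False)

theorem Fin.eq_of_ne_of_ne_three :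
    ∀ x y z w : Fin 3, x ≠ y → y ≠ z → x ≠ z → w ≠ y → w ≠ z → w = x := by
  intro x y z w
  simp only [ne_eq, Fin.ext_iff]
  omega

namespace IsCondColoring

variable {V α : Type*} {G : SimpleGraph V}

theorem ne_of_neighborSet_eq_pair {c : V → α} (hc : IsCondColoring G 2 c) {v u w : V}
    (huw : u ≠ w) (hN : G.neighborSet v = {u, w}) : c u ≠ c w := by
  intro h
  have h2 := hc.2 v
  rw [hN, Set.ncard_pair huw, Set.image_pair, ← h, Set.pair_eq_singleton,
    Set.ncard_singleton] at h2
  omega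

theorem eq_of_neighborSet_eq_pair_of_neighborSet_eq_pair {c : V → Fin 3}
    (hc : IsCondColoring G 2 c) {v₀ v₁ v₂ v₃ : V} (h₀₂ : v₀ ≠ v₂) (h₁₃ : v₁ ≠ v₃)
    (hN₁ : G.neighborSet v₁ = {v₀, v₂}) (hN₂ : G.neighborSet v₂ = {v₁, v₃}) :
    c v₃ = c v₀ := by
  have h₁₀ : G.Adj v₁ v₀ := by simp [← SimpleGraph.mem_neighborSet, hN₁]
  have h₁₂ : G.Adj v₁ v₂ := by simp [← SimpleGraph.mem_neighborSet, hN₁]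
  have h₂₃ : G.Adj v₂ v₃ := by simp [← SimpleGraph.mem_neighborSet, hN₂]
  exact Fin.eq_of_ne_of_ne_three _ _ _ _ (hc.1 h₁₀).symm (hc.1 h₁₂)
    (hc.ne_of_neighborSet_eq_pair h₀₂ hN₁) (hc.ne_of_neighborSet_eq_pair h₁₃ hN₂).symm
    (hc.1 h₂₃).symm

theorem color_eq_of_path {c : V → Fin 3} (hc : IsCondColoring G 2 c) {N : ℕ} {f : Fin N → V}
    (hf : Function.Injective f)
    (hN : ∀ k (hk : k + 2 < N),
      G.neighborSet (f ⟨k + 1, by omega⟩) = {f ⟨k, by omega⟩, f ⟨k + 2, hk⟩}) :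
    ∀ i (hi : 3 * i < N), c (f ⟨3 * i, hi⟩) = c (f ⟨0, by omega⟩) := by
  intro i
  induction i with
  | zero => intro _; rfl
  | succ i ih =>
    intro hi
    rw [show (⟨3 * (i + 1), hi⟩ : Fin N) = ⟨3 * i + 1 + 2, hi⟩ from rfl, ← ih (by omega)]
    exact hc.eq_of_neighborSet_eq_pair_of_neighborSet_eq_pair (v₂ := f ⟨3 * i + 2, by omega⟩)
      (hf.ne (by simp)) (hf.ne (by simp)) (hN (3 * i) (by omega)) (hN (3 * i + 1) hi)

end IsCondColoring

theorem twoPathsJoined_neighborSet_inl (m n k : ℕ) (hk : k + 2 < m) :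
    (twoPathsJoined m n).neighborSet (Sum.inl ⟨k + 1, by omega⟩) =
      {Sum.inl ⟨k, by omega⟩, Sum.inl ⟨k + 2, hk⟩} := by
  ext (j | j)
  · simp [twoPathsJoined, Fin.ext_iff]
    omega
  · simp [twoPathsJoined]

theorem twoPathsJoined_neighborSet_inr (m n k : ℕ) (hk : k + 2 < n) :
    (twoPathsJoined m n).neighborSet (Sum.inr ⟨k + 1, by omega⟩) =
      {Sum.inr ⟨k, by omega⟩, Sum.inr ⟨k + 2, hk⟩} := by
  ext (j | j)
  · simp [twoPathsJoined]
  · simp [twoPathsJoined, Fin.ext_iff]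
    omega

/-- In every conditional `(3,2)`-coloring of `H`: all `a_{3i}` get one common color,
all `b_{3j}` get one common color, and these two colors are distinct. -/
theorem stmt_11 (m n : ℕ) (hm : 1 ≤ m) (hn : 1 ≤ n)
    (c : Fin m ⊕ Fin n → Fin 3)
    (hc : IsCondColoring (twoPathsJoined m n) 2 c) :
    (∀ i i' : ℕ, ∀ (hi : 3 * i < m) (hi' : 3 * i' < m),
      c (Sum.inl ⟨3 * i, hi⟩) = c (Sum.inl ⟨3 * i', hi'⟩)) ∧
    (∀ j j' : ℕ, ∀ (hj : 3 * j < n) (hj' : 3 * j' < n),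
      c (Sum.inr ⟨3 * j, hj⟩) = c (Sum.inr ⟨3 * j', hj'⟩)) ∧
    c (Sum.inl ⟨0, by omega⟩) ≠ c (Sum.inr ⟨0, by omega⟩) := by
  have hA := hc.color_eq_of_path Sum.inl_injective (twoPathsJoined_neighborSet_inl m n)
  have hB := hc.color_eq_of_path Sum.inr_injective (twoPathsJoined_neighborSet_inr m n)
  refine ⟨fun i i' hi hi' => (hA i hi).trans (hA i' hi').symm,
    fun j j' hj hj' => (hB j hj).trans (hB j' hj').symm, hc.1 ?_⟩
  simp [twoPathsJoined]
end

section
/- Let G be a simple graph on vertices v_1, …, v_n with n even, and let G' be the graph obtained from G by: adding, for each i, two new vertices x_{i1}, x_{i2} and the three edges v_i x_{i1}, x_{i1} x_{i2}, x_{i2} v_i (forming a triangle on {v_i, x_{i1}, x_{i2}}); and adding the edges x_{12} x_{21}, x_{32} x_{41}, …, x_{(n−1)2} x_{n1} (i.e., x_{i2} x_{(i+1)1} for each odd i). Then G has a proper 3-coloring if and only if G' has a conditional (3,2)-coloring. -/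
/-- The graph `G'` obtained from `G` (on vertices `v_0, …, v_{n-1}`) by attaching to
each `v_u` a triangle `{v_u, x_{u,1}, x_{u,2}}` on two new vertices (encoded as
`(u, 0)` and `(u, 1)`), and adding the edge `x_{u,2} x_{u+1,1}` for each even `u`
(i.e. `x_{i2} x_{(i+1)1}` for odd `i` in `1`-based indexing). -/
def attachTriangles {n : ℕ} (G : SimpleGraph (Fin n)) :
    SimpleGraph (Fin n ⊕ Fin n × Fin 2) :=
  SimpleGraph.fromRel (fun a b =>
    match a, b with
    | Sum.inl u, Sum.inl v => G.Adj u v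
    | Sum.inl u, Sum.inr (v, _) => u = v
    | Sum.inr (u, _), Sum.inl v => u = v
    | Sum.inr (u, i), Sum.inr (v, j) =>
        u = v ∨ ((u : ℕ) % 2 = 0 ∧ (v : ℕ) = (u : ℕ) + 1 ∧ i = 1 ∧ j = 0))

open Sum

/-- Successor in `Fin n` (wrapping). -/
def nxt {n : ℕ} (u : Fin n) : Fin n := ⟨((u : ℕ) + 1) % n, Nat.mod_lt _ u.pos⟩

/-- The extension of a proper 3-coloring of `G` to `G'`. -/
def extCol {n : ℕ} (c : Fin n → Fin 3) : Fin n ⊕ Fin n × Fin 2 → Fin 3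
  | Sum.inl u => c u
  | Sum.inr (u, i) =>
    if (u : ℕ) % 2 = 0 then
      if c u + 2 ≠ c (nxt u) + 1 then (if i = 0 then c u + 1 else c u + 2)
      else (if i = 0 then c u + 2 else c u + 1)
    else (if i = 0 then c u + 1 else c u + 2)

lemma extCol_inl {n : ℕ} (c : Fin n → Fin 3) (u : Fin n) : extCol c (inl u) = c u := rfl

lemma extCol_inr {n : ℕ} (c : Fin n → Fin 3) (u : Fin n) (i : Fin 2) :
    extCol c (inr (u, i)) =
      if (u : ℕ) % 2 = 0 then
        if c u + 2 ≠ c (nxt u) + 1 then (if i = 0 then c u + 1 else c u + 2)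
        else (if i = 0 then c u + 2 else c u + 1)
      else (if i = 0 then c u + 1 else c u + 2) := rfl

lemma extCol_ne_base {n : ℕ} (c : Fin n → Fin 3) (u : Fin n) (i : Fin 2) :
    extCol c (inr (u, i)) ≠ c u := by
  rw [extCol_inr]
  generalize c u = a
  generalize c (nxt u) = b
  by_cases h : (u : ℕ) % 2 = 0 <;> simp only [h, if_true, if_false] <;>
    fin_cases i <;> revert a b <;> decide

lemma extCol_triangle_ne {n : ℕ} (c : Fin n → Fin 3) (u : Fin n) :
    extCol c (inr (u, 0)) ≠ extCol c (inr (u, 1)) := by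
  rw [extCol_inr, extCol_inr]
  generalize c u = a
  generalize c (nxt u) = b
  by_cases h : (u : ℕ) % 2 = 0 <;> simp only [h, if_true, if_false] <;> revert a b <;> decide

lemma extCol_cross_ne {n : ℕ} (c : Fin n → Fin 3) (u v : Fin n)
    (hu : (u : ℕ) % 2 = 0) (hv : (v : ℕ) = (u : ℕ) + 1) :
    extCol c (inr (u, 1)) ≠ extCol c (inr (v, 0)) := by
  have hlt : (u : ℕ) + 1 < n := hv ▸ v.isLt
  have hnv : nxt u = v := by
    apply Fin.ext
    simp [nxt, Nat.mod_eq_of_lt hlt, hv]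
  have hvodd : ¬ ((v : ℕ) % 2 = 0) := by omega
  rw [extCol_inr, extCol_inr, if_pos hu, if_neg hvodd, hnv]
  generalize c u = a
  generalize c v = b
  revert a b; decide

lemma adj_base_tri {n : ℕ} (G : SimpleGraph (Fin n)) (u : Fin n) (i : Fin 2) :
    (attachTriangles G).Adj (inl u) (inr (u, i)) := by
  rw [attachTriangles, SimpleGraph.fromRel_adj]
  exact ⟨by simp, Or.inl rfl⟩

lemma adj_tri_tri {n : ℕ} (G : SimpleGraph (Fin n)) (u : Fin n) :
    (attachTriangles G).Adj (inr (u, 0)) (inr (u, 1)) := by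
  rw [attachTriangles, SimpleGraph.fromRel_adj]
  exact ⟨by simp, Or.inl (Or.inl rfl)⟩

lemma two_le_image {V : Type*} [Finite V] {c : V → Fin 3} {S : Set V} {a b : V}
    (ha : a ∈ S) (hb : b ∈ S) (hab : c a ≠ c b) : 2 ≤ (c '' S).ncard := by
  have : 1 < (c '' S).ncard := by
    rw [Set.one_lt_ncard (S.toFinite.image c)]
    exact ⟨c a, ⟨a, ha, rfl⟩, c b, ⟨b, hb, rfl⟩, hab⟩
  omega

/-- For `n` even, `G` has a proper `3`-coloring iff `G'` has a conditional
`(3,2)`-coloring. -/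
theorem stmt_12 (n : ℕ) (hn : Even n) (G : SimpleGraph (Fin n)) :
    G.Colorable 3 ↔
      ∃ c : Fin n ⊕ Fin n × Fin 2 → Fin 3,
        IsCondColoring (attachTriangles G) 2 c := by
  constructor
  · rintro ⟨C⟩
    refine ⟨extCol C, ?_, ?_⟩
    · intro a b hadj
      rw [attachTriangles, SimpleGraph.fromRel_adj] at hadj
      obtain ⟨hne, h⟩ := hadj
      rcases a with u | ⟨u, i⟩ <;> rcases b with v | ⟨v, j⟩ <;> dsimp only at h
      · rw [extCol_inl, extCol_inl]
        rcases h with h | h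
        · exact C.valid h
        · exact (C.valid h).symm
      · rw [extCol_inl]
        rcases h with h | h <;> subst h <;> exact (extCol_ne_base C _ _).symm
      · rw [extCol_inl]
        rcases h with h | h <;> subst h <;> exact extCol_ne_base C _ _
      · rcases h with (h | ⟨hu, hv, hi, hj⟩) | (h | ⟨hu, hv, hi, hj⟩)
        · subst h
          have hij : i ≠ j := fun hh => hne (by rw [hh])
          fin_cases i <;> fin_cases j <;> first
            | exact absurd rfl hij
            | exact extCol_triangle_ne C _
            | exact (extCol_triangle_ne C _).symm
        · subst hi; subst hj
          exact extCol_cross_ne C u v hu hv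
        · subst h
          have hij : i ≠ j := fun hh => hne (by rw [hh])
          fin_cases i <;> fin_cases j <;> first
            | exact absurd rfl hij
            | exact extCol_triangle_ne C _
            | exact (extCol_triangle_ne C _).symm
        · subst hi; subst hj
          exact (extCol_cross_ne C v u hu hv).symm
    · intro w
      refine le_trans (min_le_right _ _) ?_
      rcases w with u | ⟨u, i⟩
      · exact two_le_image (adj_base_tri G u 0) (adj_base_tri G u 1)
          (extCol_triangle_ne C u)
      · have hbase : extCol (⇑C) (inl u) ≠ extCol (⇑C) (inr (u, i)) := by
          rw [extCol_inl]; exact (extCol_ne_base C u i).symm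
        fin_cases i
        · exact two_le_image ((adj_base_tri G u 0).symm) (adj_tri_tri G u)
            (by rw [extCol_inl]; exact (extCol_ne_base C u 1).symm)
        · exact two_le_image ((adj_base_tri G u 1).symm) ((adj_tri_tri G u).symm)
            (by rw [extCol_inl]; exact (extCol_ne_base C u 0).symm)
  · rintro ⟨c, h1, _⟩
    exact ⟨⟨fun u => c (inl u), fun {u v} h => by
      apply h1
      rw [attachTriangles, SimpleGraph.fromRel_adj]
      exact ⟨by simpa using h.ne, Or.inl h⟩⟩⟩
end

section
/- Let G be a simple graph on vertices v_1, …, v_n with n even, possessing a Hamiltonian cycle v_1 v_2 ⋯ v_n v_1, and let G' be the graph obtained from G by adding, for each i, two new vertices x_{i1}, x_{i2} with the triangle edges v_i x_{i1}, x_{i1} x_{i2}, x_{i2} v_i, and adding the edges x_{i2} x_{(i+1)1} for each odd i. Then G' is Hamiltonian, and the maximum degree of G' is at most Δ(G) + 2. -/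
/-!
Walk through the triangles in the order `0, 1, …, n - 1`. A triangle with even index `u` is
entered at `v_u`, traversed `v_u, x_{u,1}, x_{u,2}`, and left along the extra edge to
`x_{u+1,1}`; the following odd triangle is traversed `x_{u+1,1}, x_{u+1,2}, v_{u+1}` and left
along the edge `v_{u+1} v_{u+2}` of the Hamiltonian cycle of `G`. As `n` is even this closes up,
so `G'` receives a bijective homomorphism from the cycle on `3n` vertices.

For the degree bound, `v_u` gains only its two triangle vertices, and every `x`-vertex has at
most three neighbours, which is at most `Δ(G) + 2` since `Δ(G) ≥ 1`.
-/

open Function SimpleGraph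

lemma Set.ncard_triple_le {α : Type*} [DecidableEq α] (a b c : α) :
    ({a, b, c} : Set α).ncard ≤ 3 := by
  simpa using (Set.ncard_coe_finset ({a, b, c} : Finset α)).trans_le Finset.card_le_three

namespace SimpleGraph

lemma ncard_neighborSet_eq_degree {V : Type*} [Fintype V] (G : SimpleGraph V)
    [DecidableRel G.Adj] (v : V) : (G.neighborSet v).ncard = G.degree v := by
  rw [← Nat.card_coe_set_eq, Nat.card_eq_fintype_card, card_neighborSet_eq_degree]

variable {V W : Type*} [Fintype V] [Fintype W] [DecidableEq V] [DecidableEq W]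

lemma cycleGraph_isHamiltonian (m : ℕ) : (cycleGraph (m + 3)).IsHamiltonian := fun _ =>
  ⟨0, cycleGraph.cycle m, Walk.isHamiltonianCycle_iff_isCycle_and_length_eq.mpr
    ⟨cycleGraph.isCycle_cycle, by simp [cycleGraph.length_cycle]⟩⟩

lemma IsHamiltonian.map_of_bijective {G : SimpleGraph V} {H : SimpleGraph W}
    (hG : G.IsHamiltonian) (f : G →g H) (hf : Bijective f) : H.IsHamiltonian := by
  intro hcard
  obtain ⟨a, p, hp⟩ := hG (by rwa [Fintype.card_of_bijective hf])
  exact ⟨f a, p.map f, hp.map hf⟩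

lemma isHamiltonian_of_bijective_of_adj_add_one {H : SimpleGraph V} {m : ℕ} [NeZero m]
    (hm : 3 ≤ m) (f : Fin m → V) (hf : Bijective f) (hadj : ∀ k, H.Adj (f k) (f (k + 1))) :
    H.IsHamiltonian := by
  obtain ⟨m, rfl⟩ : ∃ k, m = k + 3 := ⟨m - 3, by omega⟩
  refine (cycleGraph_isHamiltonian m).map_of_bijective ⟨f, fun {u v} huv => ?_⟩ hf
  rcases cycleGraph_adj.mp huv with h | h
  · rw [sub_eq_iff_eq_add'.mp h]
    exact (hadj v).symm
  · rw [sub_eq_iff_eq_add'.mp h]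
    exact hadj u

lemma finProdFinEquiv_castSucc_add_one {m r : ℕ} [NeZero (m * (r + 1))] (u : Fin m)
    (j : Fin r) : finProdFinEquiv (u, j.castSucc) + 1 = finProdFinEquiv (u, j.succ) := by
  ext
  rw [Fin.val_add_one_of_lt']
  · simp only [finProdFinEquiv_apply_val, Fin.val_castSucc, Fin.val_succ]
    ring
  · simp only [finProdFinEquiv_apply_val, Fin.val_castSucc]
    nlinarith [j.isLt, u.isLt]

lemma finProdFinEquiv_last_add_one {m r : ℕ} [NeZero m] (u : Fin m) :
    finProdFinEquiv (u, Fin.last r) + 1 = finProdFinEquiv (u + 1, 0) := by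
  ext
  simp only [Fin.val_add, finProdFinEquiv_apply_val, Fin.val_last, Fin.coe_ofNat_eq_mod,
    Nat.add_mod_mod, Nat.zero_mod, zero_add]
  rw [show r + (r + 1) * u + 1 = (r + 1) * (u + 1) by ring, mul_comm m, Nat.mul_mod_mul_left]

lemma isHamiltonian_of_lex_tour {H : SimpleGraph V} {m r : ℕ} [NeZero m]
    (h3 : 3 ≤ m * (r + 1)) (g : Fin m × Fin (r + 1) → V) (hg : Bijective g)
    (hstep : ∀ u (j : Fin r), H.Adj (g (u, j.castSucc)) (g (u, j.succ)))
    (hjump : ∀ u, H.Adj (g (u, Fin.last r)) (g (u + 1, 0))) : H.IsHamiltonian := by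
  refine isHamiltonian_of_bijective_of_adj_add_one h3 (g ∘ finProdFinEquiv.symm)
    (hg.comp finProdFinEquiv.symm.bijective) fun k => ?_
  obtain ⟨⟨u, j⟩, rfl⟩ := finProdFinEquiv.surjective k
  induction j using Fin.lastCases with
  | last => simpa [finProdFinEquiv_last_add_one] using hjump u
  | cast j => simpa [finProdFinEquiv_castSucc_add_one] using hstep u j

end SimpleGraph

lemma Fin.even_val_add_one_iff {n : ℕ} [NeZero n] (hn : Even n) (u : Fin n) :
    Even (u + 1).val ↔ ¬Even u.val := by
  rw [Fin.val_add, Fin.val_one', Nat.add_mod_mod, hn.mod_even_iff, Nat.even_add_one]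

section attachTriangles

variable {n : ℕ} {G : SimpleGraph (Fin n)}

/-- The order in which the Hamiltonian cycle of `attachTriangles G` visits the triangle at `u`. -/
def triangleTour (u : Fin n) : Fin 3 → Fin n ⊕ Fin n × Fin 2 :=
  if Even u.val then ![.inl u, .inr (u, 0), .inr (u, 1)] else ![.inr (u, 0), .inr (u, 1), .inl u]

lemma triangleTour_bijective : Bijective fun p : Fin n × Fin 3 => triangleTour p.1 p.2 := by
  refine (Fintype.bijective_iff_injective_and_card _).mpr ⟨?_, by simp; ring⟩
  rintro ⟨u, j⟩ ⟨v, k⟩ h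
  simp only [triangleTour] at h
  split_ifs at h <;> fin_cases j <;> fin_cases k <;> simp_all [-Nat.not_even_iff_odd]

lemma attachTriangles_adj_triangleTour_succ (u : Fin n) (j : Fin 2) :
    (attachTriangles G).Adj (triangleTour u j.castSucc) (triangleTour u j.succ) := by
  unfold triangleTour
  split_ifs <;> fin_cases j <;> simp [attachTriangles]

lemma attachTriangles_adj_triangleTour_last [NeZero n] (hn : Even n)
    (hG : ∀ i : Fin n, G.Adj i (i + 1)) (u : Fin n) :
    (attachTriangles G).Adj (triangleTour u 2) (triangleTour (u + 1) 0) := by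
  by_cases hu : Even u.val
  · have hsucc : (u + 1).val = u.val + 1 := Fin.val_add_one_of_lt' <| by
      obtain ⟨a, ha⟩ := hn
      obtain ⟨b, hb⟩ := hu
      omega
    rw [triangleTour, if_pos hu, triangleTour,
      if_neg ((Fin.even_val_add_one_iff hn u).not.mpr (not_not.mpr hu))]
    simp [attachTriangles, hsucc, Nat.even_iff.mp hu]
  · rw [triangleTour, if_neg hu, triangleTour, if_pos ((Fin.even_val_add_one_iff hn u).mpr hu)]
    simp [attachTriangles, hG u, (hG u).ne]

theorem attachTriangles_isHamiltonian [NeZero n] (hn : Even n)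
    (hG : ∀ i : Fin n, G.Adj i (i + 1)) : (attachTriangles G).IsHamiltonian :=
  isHamiltonian_of_lex_tour (by have := NeZero.pos n; omega) _ triangleTour_bijective
    attachTriangles_adj_triangleTour_succ (attachTriangles_adj_triangleTour_last hn hG)

lemma attachTriangles_neighborSet_inl (u : Fin n) :
    (attachTriangles G).neighborSet (.inl u) =
      .inl '' G.neighborSet u ∪ {.inr (u, 0), .inr (u, 1)} := by
  ext (v | ⟨v, j⟩)
  · simp only [attachTriangles, mem_neighborSet, fromRel_adj, ne_eq, Sum.inl.injEq, G.adj_comm v,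
      or_self, Set.mem_union, Set.mem_image, Set.mem_insert_iff, Set.mem_singleton_iff,
      exists_eq_right, reduceCtorEq, or_false]
    exact ⟨And.right, fun h => ⟨h.ne, h⟩⟩
  · fin_cases j <;> simp [attachTriangles, eq_comm]

lemma attachTriangles_neighborSet_inr_zero_subset [NeZero n] (u : Fin n) :
    (attachTriangles G).neighborSet (.inr (u, 0)) ⊆ {.inl u, .inr (u, 1), .inr (u - 1, 1)} := by
  rintro (v | ⟨v, j⟩) h
  · simp_all [attachTriangles, eq_comm]
  · fin_cases j
    · simp_all [attachTriangles, eq_comm]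
    · simp only [attachTriangles, mem_neighborSet, fromRel_adj, Fin.mk_one, Fin.isValue, ne_eq,
        Sum.inr.injEq, Prod.mk.injEq, zero_ne_one, and_false, not_false_eq_true, and_true,
        one_ne_zero, or_false, true_and] at h
      rcases h with rfl | rfl | ⟨-, hu⟩
      · simp
      · simp
      have hu0 : u ≠ 0 := by rintro rfl; simp at hu
      simp only [Set.mem_insert_iff, Set.mem_singleton_iff, Sum.inr.injEq, Prod.mk.injEq]
      exact Or.inr (Or.inr ⟨Fin.ext (by rw [Fin.val_sub_one_of_ne_zero hu0]; omega), rfl⟩)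

lemma attachTriangles_neighborSet_inr_one_subset [NeZero n] (u : Fin n) :
    (attachTriangles G).neighborSet (.inr (u, 1)) ⊆ {.inl u, .inr (u, 0), .inr (u + 1, 0)} := by
  rintro (v | ⟨v, j⟩) h
  · simp_all [attachTriangles, eq_comm]
  · fin_cases j
    · simp only [attachTriangles, Fin.isValue, Fin.zero_eta, mem_neighborSet, fromRel_adj, ne_eq,
        Sum.inr.injEq, Prod.mk.injEq, one_ne_zero, and_false, not_false_eq_true, and_self, and_true,
        zero_ne_one, or_false, true_and] at h
      rcases h with (rfl | ⟨-, hv⟩) | rfl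
      · simp
      · simp only [Set.mem_insert_iff, Set.mem_singleton_iff, Sum.inr.injEq, Prod.mk.injEq]
        exact Or.inr (Or.inr ⟨Fin.ext (by rw [Fin.val_add_one_of_lt' (by omega)]; omega), rfl⟩)
      · simp
    · simp_all [attachTriangles, eq_comm]

lemma attachTriangles_ncard_neighborSet_inl_le [DecidableRel G.Adj] (u : Fin n) :
    ((attachTriangles G).neighborSet (.inl u)).ncard ≤ G.degree u + 2 := by
  rw [attachTriangles_neighborSet_inl]
  calc _ ≤ (.inl '' G.neighborSet u : Set (Fin n ⊕ Fin n × Fin 2)).ncard +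
        ({.inr (u, 0), .inr (u, 1)} : Set (Fin n ⊕ Fin n × Fin 2)).ncard :=
      Set.ncard_union_le _ _
    _ = G.degree u + 2 := by
      rw [Set.ncard_image_of_injective _ Sum.inl_injective, ncard_neighborSet_eq_degree,
        Set.ncard_pair (by simp)]

lemma attachTriangles_ncard_neighborSet_inr_le [NeZero n] (u : Fin n) (i : Fin 2) :
    ((attachTriangles G).neighborSet (.inr (u, i))).ncard ≤ 3 := by
  fin_cases i
  · exact (Set.ncard_le_ncard (attachTriangles_neighborSet_inr_zero_subset u)).trans
      (Set.ncard_triple_le _ _ _)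
  · exact (Set.ncard_le_ncard (attachTriangles_neighborSet_inr_one_subset u)).trans
      (Set.ncard_triple_le _ _ _)

theorem attachTriangles_ncard_neighborSet_le [NeZero n] [DecidableRel G.Adj]
    (hG : ∀ i : Fin n, G.Adj i (i + 1)) (a : Fin n ⊕ Fin n × Fin 2) :
    ((attachTriangles G).neighborSet a).ncard ≤ G.maxDegree + 2 := by
  rcases a with u | ⟨u, i⟩
  · exact (attachTriangles_ncard_neighborSet_inl_le u).trans
      (Nat.add_le_add_right (G.degree_le_maxDegree u) 2)
  · have hΔ : 1 ≤ G.maxDegree :=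
      ((G.degree_pos_iff_exists_adj 0).mpr ⟨_, hG 0⟩).trans_le (G.degree_le_maxDegree 0)
    have hx := attachTriangles_ncard_neighborSet_inr_le (G := G) u i
    omega

end attachTriangles

/-- If `G` has the Hamiltonian cycle `v_0 v_1 ⋯ v_{n-1} v_0` and `n` is even, then
`G'` is Hamiltonian and its maximum degree is at most `Δ(G) + 2`. -/
theorem stmt_13 (n : ℕ) (hn3 : 3 ≤ n) (hn : Even n) (G : SimpleGraph (Fin n))
    [DecidableRel G.Adj] (hham : ∀ i : Fin n, G.Adj i (i + ⟨1, by omega⟩)) :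
    (attachTriangles G).IsHamiltonian ∧
    ∀ a : Fin n ⊕ Fin n × Fin 2,
      ((attachTriangles G).neighborSet a).ncard ≤ G.maxDegree + 2 := by
  have : NeZero n := ⟨by omega⟩
  have hone : (1 : Fin n) = ⟨1, by omega⟩ :=
    Fin.ext (by rw [Fin.val_one']; exact Nat.mod_eq_of_lt (by omega))
  have hG : ∀ i : Fin n, G.Adj i (i + 1) := by simpa only [hone] using hham
  exact ⟨attachTriangles_isHamiltonian hn hG, attachTriangles_ncard_neighborSet_le hG⟩
end
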